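/- arXiv:1705.09328 — 5 statements merged into one kernel-verified Lean document; each statement's English description precedes it below -/
import Mathlib

section
/- If every club has α_c = 1 and γ_c = 0 and every club has exactly one donor and one patient, then a set of edges in which each donor appears in at most one edge and each patient appears in at most one edge is feasible if and only if the edge set decomposes into vertex-disjoint directed cycles of the induced graph on clubs (where club u points to club v if an edge from u's donor to v's patient is selected). -/
/-!
Counting every selected edge once at its tail and once at its head gives
`∑ c, out c = ∑ c, in c`, so feasibility (`out c ≤ in c` at every club) forces
`out c = in c`; in particular `in c ≤ 1`, and a club has an outgoing edge iff it has
an incoming one. Following the outgoing edge of a club, and staying put when there is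
none, is then an injective, hence bijective, self-map of the finite set of clubs whose
non-trivial moves are exactly the selected edges. Conversely, if the selected edges are
the moves of a permutation, a club with an outgoing edge is moved, so it also has an
incoming edge.
-/

open Finset

namespace Finset

variable {α : Type*}

section Degree

variable [DecidableEq α] (S : Finset (α × α))

theorem card_filter_fst_pos_iff (a : α) :
    0 < (S.filter fun e => e.1 = a).card ↔ ∃ b, (a, b) ∈ S := by
  rw [card_pos, filter_nonempty_iff]
  constructor
  · rintro ⟨e, he, rfl⟩
    exact ⟨e.2, he⟩
  · rintro ⟨b, hb⟩
    exact ⟨(a, b), hb, rfl⟩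

theorem card_filter_snd_pos_iff (b : α) :
    0 < (S.filter fun e => e.2 = b).card ↔ ∃ a, (a, b) ∈ S := by
  rw [card_pos, filter_nonempty_iff]
  constructor
  · rintro ⟨e, he, rfl⟩
    exact ⟨e.1, he⟩
  · rintro ⟨a, ha⟩
    exact ⟨(a, b), ha, rfl⟩

theorem eq_of_mem_of_card_filter_fst_le_one {a b b' : α}
    (hout : (S.filter fun e => e.1 = a).card ≤ 1) (hb : (a, b) ∈ S) (hb' : (a, b') ∈ S) :
    b = b' :=
  congrArg Prod.snd <| card_le_one.mp hout _ (mem_filter.mpr ⟨hb, rfl⟩) _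
    (mem_filter.mpr ⟨hb', rfl⟩)

theorem eq_of_mem_of_card_filter_snd_le_one {a a' b : α}
    (hin : (S.filter fun e => e.2 = b).card ≤ 1) (ha : (a, b) ∈ S) (ha' : (a', b) ∈ S) :
    a = a' :=
  congrArg Prod.fst <| card_le_one.mp hin _ (mem_filter.mpr ⟨ha, rfl⟩) _
    (mem_filter.mpr ⟨ha', rfl⟩)

theorem sum_card_filter_fst_eq_sum_card_filter_snd [Fintype α] :
    ∑ c, (S.filter fun e => e.1 = c).card = ∑ c, (S.filter fun e => e.2 = c).card := by
  rw [← card_eq_sum_card_fiberwise fun e _ => mem_univ e.1,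
    ← card_eq_sum_card_fiberwise fun e _ => mem_univ e.2]

theorem card_filter_fst_eq_card_filter_snd_of_le [Fintype α]
    (hle : ∀ c, (S.filter fun e => e.1 = c).card ≤ (S.filter fun e => e.2 = c).card)
    (c : α) : (S.filter fun e => e.1 = c).card = (S.filter fun e => e.2 = c).card :=
  (sum_eq_sum_iff_of_le fun c _ => hle c).mp (sum_card_filter_fst_eq_sum_card_filter_snd S) c
    (mem_univ c)

theorem card_filter_fst_le_card_filter_snd_of_perm {σ : Equiv.Perm α}
    (hσ : ∀ e : α × α, e ∈ S ↔ σ e.1 = e.2 ∧ e.1 ≠ e.2) {c : α}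
    (hout : (S.filter fun e => e.1 = c).card ≤ 1) :
    (S.filter fun e => e.1 = c).card ≤ (S.filter fun e => e.2 = c).card := by
  by_cases hfix : σ c = c
  · have hnone : ¬ 0 < (S.filter fun e => e.1 = c).card := by
      rw [card_filter_fst_pos_iff]
      rintro ⟨b, hb⟩
      obtain ⟨hσb, hne⟩ := (hσ _).mp hb
      exact hne (hfix.symm.trans hσb)
    omega
  · have hpred : (σ.symm c, c) ∈ S :=
      (hσ _).mpr ⟨σ.apply_symm_apply c, fun h => hfix (σ.symm_apply_eq.mp h).symm⟩
    have hin : 0 < (S.filter fun e => e.2 = c).card :=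
      (card_filter_snd_pos_iff S c).mpr ⟨_, hpred⟩
    omega

end Degree

section Successor

open Classical in
noncomputable def successor (S : Finset (α × α)) (a : α) : α :=
  if h : ∃ b, (a, b) ∈ S then h.choose else a

variable (S : Finset (α × α))

theorem mem_successor {a : α} (h : ∃ b, (a, b) ∈ S) : (a, S.successor a) ∈ S := by
  rw [successor, dif_pos h]
  exact h.choose_spec

theorem successor_eq_self {a : α} (h : ¬ ∃ b, (a, b) ∈ S) : S.successor a = a := by
  rw [successor, dif_neg h]

variable [DecidableEq α]

theorem successor_eq_of_mem {a b : α} (hout : (S.filter fun e => e.1 = a).card ≤ 1)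
    (h : (a, b) ∈ S) : S.successor a = b :=
  eq_of_mem_of_card_filter_fst_le_one S hout (S.mem_successor ⟨b, h⟩) h

theorem mem_iff_successor_eq (hloop : ∀ c, (c, c) ∉ S)
    (hout : ∀ c, (S.filter fun e => e.1 = c).card ≤ 1) (e : α × α) :
    e ∈ S ↔ S.successor e.1 = e.2 ∧ e.1 ≠ e.2 := by
  obtain ⟨a, b⟩ := e
  constructor
  · intro he
    refine ⟨S.successor_eq_of_mem (hout a) he, fun h : a = b => hloop a ?_⟩
    rwa [← h] at he
  · rintro ⟨hsucc, hne⟩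
    by_cases h : ∃ c, (a, c) ∈ S
    · simpa [hsucc] using S.mem_successor h
    · exact absurd ((S.successor_eq_self h).symm.trans hsucc) hne

theorem successor_injective (hin : ∀ c, (S.filter fun e => e.2 = c).card ≤ 1)
    (hdom : ∀ a, (∃ b, (a, b) ∈ S) ↔ ∃ b, (b, a) ∈ S) : Function.Injective S.successor := by
  have hmoved : ∀ {a b}, (∃ c, (a, c) ∈ S) → (¬ ∃ c, (b, c) ∈ S) →
      S.successor a ≠ S.successor b := by
    intro a b ha hb heq
    rw [S.successor_eq_self hb] at heq
    exact hb ((hdom b).mpr ⟨a, heq ▸ S.mem_successor ha⟩)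
  intro a b heq
  by_cases ha : ∃ c, (a, c) ∈ S <;> by_cases hb : ∃ c, (b, c) ∈ S
  · exact eq_of_mem_of_card_filter_snd_le_one S (hin _) (S.mem_successor ha)
      (heq ▸ S.mem_successor hb)
  · exact absurd heq (hmoved ha hb)
  · exact absurd heq.symm (hmoved hb ha)
  · rwa [S.successor_eq_self ha, S.successor_eq_self hb] at heq

end Successor

end Finset

/-- A set of selected edges decomposes into vertex-disjoint directed cycles of the club
graph iff it is the set of non-trivial moves `c ↦ σ c` of a permutation `σ` of the clubs. -/
theorem stmt_1_general {C : Type} [Fintype C] [DecidableEq C] (S : Finset (C × C))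
    (hloop : ∀ c, (c, c) ∉ S)
    (hout : ∀ c, (S.filter fun e => e.1 = c).card ≤ 1) :
    (∀ c, (S.filter fun e => e.1 = c).card ≤ (S.filter fun e => e.2 = c).card)
      ↔ ∃ σ : Equiv.Perm C, ∀ e : C × C, e ∈ S ↔ σ e.1 = e.2 ∧ e.1 ≠ e.2 := by
  constructor
  · intro hle
    have hdeg := S.card_filter_fst_eq_card_filter_snd_of_le hle
    have hinj : Function.Injective S.successor :=
      S.successor_injective (fun c => hdeg c ▸ hout c) fun a => by
        rw [← card_filter_fst_pos_iff, ← card_filter_snd_pos_iff, hdeg]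
    exact ⟨Equiv.ofBijective _ (Finite.injective_iff_bijective.mp hinj),
      S.mem_iff_successor_eq hloop hout⟩
  · rintro ⟨σ, hσ⟩ c
    exact S.card_filter_fst_le_card_filter_snd_of_perm hσ (hout c)

/-- every club has one donor, one patient, `α = 1`, `γ = 0`.
Clubs are the vertices of type `C`, and `S` is the set of selected inter-club
edges (club `u` points to club `v` if an edge from `u`'s donor to `v`'s
patient is selected); since each donor donates at most once and each patient
receives at most once, every club has out-degree ≤ 1 and in-degree ≤ 1.
Feasibility (`n_d^ext ≤ n_p^ext` for each club) holds iff `S` decomposes into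
vertex-disjoint directed cycles, i.e. iff `S` is the set of non-fixed-point
moves of some permutation of the clubs. -/
theorem stmt_1 {C : Type} [Fintype C] [DecidableEq C] (S : Finset (C × C))
    (hloop : ∀ c, (c, c) ∉ S)
    (hout : ∀ c, (S.filter fun e => e.1 = c).card ≤ 1)
    (hin : ∀ c, (S.filter fun e => e.2 = c).card ≤ 1) :
    (∀ c, (S.filter fun e => e.1 = c).card ≤ (S.filter fun e => e.2 = c).card)
      ↔ ∃ σ : Equiv.Perm C, ∀ e : C × C, e ∈ S ↔ σ e.1 = e.2 ∧ e.1 ≠ e.2 :=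
  stmt_1_general S hloop hout
end

section
/- In the NP-hardness construction from SET-PACKING, if a disjoint subfamily X ⊆ S of size k exists, then there is a feasible edge selection of total weight at least kM and strictly less than (k+1)M, where M = |U| + 1. -/
/-- An exchange club: a set of donors, a set of patients, a matching
multiplier `alpha` and a matching debt `gamma`. -/
structure Club (D P : Type) where
  donors : Finset D
  patients : Finset P
  alpha : ℚ
  gamma : ℚ

variable {D P : Type} [DecidableEq D] [DecidableEq P]

/-- Number of selected edges from donors of club `c` to patients outside `c`. -/
def ndExt (c : Club D P) (S : Finset (D × P)) : ℕ :=
  (S.filter fun e => e.1 ∈ c.donors ∧ e.2 ∉ c.patients).card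

/-- Number of selected edges from donors outside `c` to patients of club `c`. -/
def npExt (c : Club D P) (S : Finset (D × P)) : ℕ :=
  (S.filter fun e => e.1 ∉ c.donors ∧ e.2 ∈ c.patients).card

/-- The feasibility constraint of club `c` for a simultaneous selection `S`:
`n_d^ext ≤ α_c · n_p^ext + γ_c`. -/
def ClubOk (c : Club D P) (S : Finset (D × P)) : Prop :=
  (ndExt c S : ℚ) ≤ c.alpha * (npExt c S : ℚ) + c.gamma

/-- Each donor donates at most once and each patient receives at most once. -/
def DonorPatientCaps (S : Finset (D × P)) : Prop :=
  (∀ d, (S.filter fun e => e.1 = d).card ≤ 1) ∧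
  (∀ p, (S.filter fun e => e.2 = p).card ≤ 1)

/-! The explicit NP-hardness construction from SET-PACKING. -/

variable (U : Type) [Fintype U] [DecidableEq U]

/-- Donors: one item donor per item `u ∈ U` (for club `a_u`), and one gate
donor per subset `s` (for club `b_s`). -/
abbrev Don (U : Type) := U ⊕ Finset U

/-- Patients: one patient `(s, u)` inside gate club `b_s` for each `u ∈ s`,
and one patient per subset `s` (for club `c_s`). -/
abbrev Pat (U : Type) := (Finset U × U) ⊕ Finset U

/-- Item club `a_u`: one donor, no patients, `γ = 1`. -/
def itemClub (u : U) : Club (Don U) (Pat U) := ⟨{Sum.inl u}, ∅, 1, 1⟩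

/-- Gate club `b_s`: one donor, `|s|` patients, `α = 1/|s|`, `γ = 0`. -/
def gateClub (s : Finset U) : Club (Don U) (Pat U) :=
  ⟨{Sum.inr s}, s.image fun u => Sum.inl (s, u), 1 / (s.card : ℚ), 0⟩

/-- Sink club `c_s`: no donors, one patient. -/
def sinkClub (s : Finset U) : Club (Don U) (Pat U) := ⟨∅, {Sum.inr s}, 1, 0⟩

/-- Compatibility edges: a weight-`M` edge from the donor of `b_s` to the
patient of `c_s` for each `s ∈ fam`, and a weight-1 edge from the donor of
`a_u` to patient `(s, u)` of `b_s` whenever `u ∈ s ∈ fam`. -/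
def edges (fam : Finset (Finset U)) : Finset (Don U × Pat U) :=
  (fam.image fun s => (Sum.inr s, Sum.inr s)) ∪
    fam.biUnion fun s => s.image fun u => (Sum.inl u, Sum.inl (s, u))

/-- Edge weights: `M = |U| + 1` on the gate-to-sink edges, `1` elsewhere. -/
def wt : Don U × Pat U → ℚ
  | (Sum.inr _, Sum.inr _) => (Fintype.card U : ℚ) + 1
  | _ => 1

/-- Feasibility of all the clubs of the construction. -/
def AllClubsOk (fam : Finset (Finset U)) (S : Finset (Don U × Pat U)) : Prop :=
  (∀ u : U, ClubOk (itemClub U u) S) ∧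
  (∀ s ∈ fam, ClubOk (gateClub U s) S) ∧
  (∀ s ∈ fam, ClubOk (sinkClub U s) S)


/-!
Select the edges that the construction builds on `X` itself: the gate-to-sink edge of every
`s ∈ X` and all item edges into the gates of `X`. Every edge is determined by its patient, and
since the sets of `X` are disjoint, also by its donor. So an item club gives at most once, within
its debt `γ = 1`; a gate of `X` gives once and receives `|s|` times, which `α = 1/|s|` pays for
exactly; sinks never give. The weight is `k M + ∑_{s ∈ X} |s|`, and the disjoint sets of `X` have
at most `|U| < M` elements in total.
-/

section Clubs

variable {c : Club D P} {S : Finset (D × P)}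

theorem card_filter_eq_le_one_of_injOn {α β : Type} [DecidableEq β] {s : Finset α} {f : α → β}
    (hf : Set.InjOn f s) (b : β) : (s.filter fun a => f a = b).card ≤ 1 :=
  Finset.card_le_one.2 fun _ ha _ hb =>
    hf (Finset.mem_filter.1 ha).1 (Finset.mem_filter.1 hb).1
      ((Finset.mem_filter.1 ha).2.trans (Finset.mem_filter.1 hb).2.symm)

theorem donorPatientCaps_of_injOn (hfst : Set.InjOn Prod.fst (S : Set (D × P)))
    (hsnd : Set.InjOn Prod.snd (S : Set (D × P))) : DonorPatientCaps S :=
  ⟨card_filter_eq_le_one_of_injOn hfst, card_filter_eq_le_one_of_injOn hsnd⟩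

theorem ndExt_le_card_donors (hfst : Set.InjOn Prod.fst (S : Set (D × P))) :
    ndExt c S ≤ c.donors.card :=
  Finset.card_le_card_of_injOn Prod.fst (fun _ he => (Finset.mem_filter.1 he).2.1)
    (hfst.mono fun _ he => (Finset.mem_filter.1 he).1)

theorem card_patients_le_npExt (h : ∀ p ∈ c.patients, ∃ d ∉ c.donors, (d, p) ∈ S) :
    c.patients.card ≤ npExt c S :=
  Finset.card_le_card_of_surjOn Prod.snd fun p hp => by
    obtain ⟨d, hd, hdp⟩ := h p hp
    exact ⟨(d, p), Finset.mem_filter.2 ⟨hdp, hd, hp⟩, rfl⟩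

theorem clubOk_of_ndExt_le_gamma (hα : 0 ≤ c.alpha) (h : (ndExt c S : ℚ) ≤ c.gamma) :
    ClubOk c S :=
  h.trans (le_add_of_nonneg_left (mul_nonneg hα (Nat.cast_nonneg _)))

end Clubs

section Construction

variable {α : Type} [DecidableEq α] {fam : Finset (Finset α)}

theorem mem_edges {e : Don α × Pat α} :
    e ∈ edges α fam ↔ (∃ s ∈ fam, (Sum.inr s, Sum.inr s) = e) ∨
      ∃ s ∈ fam, ∃ u ∈ s, (Sum.inl u, Sum.inl (s, u)) = e := by
  simp [edges]

theorem edges_mono : Monotone (edges α) := fun _ _ h =>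
  Finset.union_subset_union (Finset.image_subset_image h)
    (Finset.biUnion_subset_biUnion_of_subset_left _ h)

theorem injOn_snd_edges : Set.InjOn Prod.snd (edges α fam : Set (Don α × Pat α)) := by
  intro a ha b hb hab
  rcases mem_edges.1 ha with ⟨s, -, rfl⟩ | ⟨s, -, u, -, rfl⟩ <;>
    rcases mem_edges.1 hb with ⟨t, -, rfl⟩ | ⟨t, -, v, -, rfl⟩ <;>
    simp_all

theorem injOn_fst_edges (hfam : (fam : Set (Finset α)).Pairwise Disjoint) :
    Set.InjOn Prod.fst (edges α fam : Set (Don α × Pat α)) := by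
  intro a ha b hb hab
  rcases mem_edges.1 ha with ⟨s, -, rfl⟩ | ⟨s, hs, u, hus, rfl⟩ <;>
    rcases mem_edges.1 hb with ⟨t, -, rfl⟩ | ⟨t, ht, v, hvt, rfl⟩ <;>
    simp only [Sum.inl.injEq, Sum.inr.injEq, reduceCtorEq] at hab
  · rw [hab]
  · subst hab
    rw [hfam.eq hs ht (Finset.not_disjoint_iff.2 ⟨u, hus, hvt⟩)]

theorem sum_wt_edges [Fintype α] (fam : Finset (Finset α)) :
    ∑ e ∈ edges α fam, wt α e =
      fam.card * ((Fintype.card α : ℚ) + 1) + ∑ s ∈ fam, (s.card : ℚ) := by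
  have hdisj : Disjoint (fam.image fun s => ((Sum.inr s : Don α), (Sum.inr s : Pat α)))
      (fam.biUnion fun s => s.image fun u => ((Sum.inl u : Don α), (Sum.inl (s, u) : Pat α))) := by
    simp [Finset.disjoint_left]
  rw [edges, Finset.sum_union hdisj, Finset.sum_image (by simp), Finset.sum_biUnion]
  · congr 1
    · simp [wt, mul_add]
    · refine Finset.sum_congr rfl fun s _ => ?_
      simp [wt, Finset.sum_image]
  · intro s _ t _ hst
    simp only [Function.onFun, Finset.disjoint_left, Finset.mem_image, not_exists, not_and]
    rintro _ ⟨u, -, rfl⟩ v - h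
    exact hst (congrArg Prod.fst (Sum.inl.inj (congrArg Prod.snd h))).symm

theorem sum_card_le_card_of_pairwise_disjoint [Fintype α] {X : Finset (Finset α)}
    (hX : (X : Set (Finset α)).Pairwise Disjoint) : ∑ s ∈ X, s.card ≤ Fintype.card α :=
  (Finset.card_biUnion (t := id) hX).symm.trans_le (Finset.card_le_univ _)

theorem ndExt_gateClub_edges_of_notMem {s : Finset α} (hs : s ∉ fam) :
    ndExt (gateClub α s) (edges α fam) = 0 := by
  refine Finset.card_eq_zero.2 (Finset.filter_eq_empty_iff.2 fun e he ⟨hd, _⟩ => ?_)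
  rcases mem_edges.1 he with ⟨t, ht, rfl⟩ | ⟨t, -, u, -, rfl⟩ <;> simp_all [gateClub]

theorem card_le_npExt_gateClub_edges {s : Finset α} (hs : s ∈ fam) :
    s.card ≤ npExt (gateClub α s) (edges α fam) := by
  have hpatients : (gateClub α s).patients.card = s.card :=
    Finset.card_image_of_injective _ fun u v h => by simpa using h
  refine hpatients ▸ card_patients_le_npExt fun p hp => ?_
  obtain ⟨u, hu, rfl⟩ := Finset.mem_image.1 hp
  exact ⟨Sum.inl u, by simp [gateClub], mem_edges.2 (Or.inr ⟨s, hs, u, hu, rfl⟩)⟩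

theorem clubOk_itemClub_edges (hfam : (fam : Set (Finset α)).Pairwise Disjoint) (u : α) :
    ClubOk (itemClub α u) (edges α fam) := by
  refine clubOk_of_ndExt_le_gamma zero_le_one ?_
  have hnd := ndExt_le_card_donors (c := itemClub α u) (injOn_fst_edges hfam)
  simp only [itemClub, Finset.card_singleton] at hnd ⊢
  exact_mod_cast hnd

theorem clubOk_gateClub_edges (hne : ∀ s ∈ fam, s.Nonempty)
    (hfam : (fam : Set (Finset α)).Pairwise Disjoint) (s : Finset α) :
    ClubOk (gateClub α s) (edges α fam) := by
  by_cases hs : s ∈ fam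
  · have hcard : (0 : ℚ) < s.card := by exact_mod_cast (hne s hs).card_pos
    have hnd : (ndExt (gateClub α s) (edges α fam) : ℚ) ≤ 1 := by
      exact_mod_cast ndExt_le_card_donors (injOn_fst_edges hfam)
    have hnp : (s.card : ℚ) ≤ npExt (gateClub α s) (edges α fam) := by
      exact_mod_cast card_le_npExt_gateClub_edges hs
    calc (ndExt (gateClub α s) (edges α fam) : ℚ)
        ≤ 1 / s.card * s.card + 0 := by rwa [add_zero, one_div_mul_cancel hcard.ne']
      _ ≤ 1 / s.card * npExt (gateClub α s) (edges α fam) + 0 := by gcongr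
  · refine clubOk_of_ndExt_le_gamma (by simp [gateClub]) ?_
    rw [ndExt_gateClub_edges_of_notMem hs, Nat.cast_zero]
    exact le_rfl

theorem clubOk_sinkClub_edges (s : Finset α) : ClubOk (sinkClub α s) (edges α fam) :=
  clubOk_of_ndExt_le_gamma zero_le_one (by simp [ndExt, sinkClub])

theorem allClubsOk_edges (hne : ∀ s ∈ fam, s.Nonempty)
    (hfam : (fam : Set (Finset α)).Pairwise Disjoint) (fam' : Finset (Finset α)) :
    AllClubsOk α fam' (edges α fam) :=
  ⟨clubOk_itemClub_edges hfam, fun s _ => clubOk_gateClub_edges hne hfam s,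
    fun s _ => clubOk_sinkClub_edges s⟩

end Construction

/-- if a pairwise disjoint subfamily `X ⊆ fam` of size `k`
exists, then the constructed instance has a feasible edge selection of total
weight at least `kM` and strictly less than `(k+1)M`, where `M = |U| + 1`. -/
theorem stmt_5 (fam : Finset (Finset U)) (hne : ∀ s ∈ fam, s.Nonempty) (k : ℕ)
    (X : Finset (Finset U)) (hX : X ⊆ fam) (hXcard : X.card = k)
    (hXdisj : (X : Set (Finset U)).Pairwise fun a b => Disjoint a b) :
    ∃ S ⊆ edges U fam, DonorPatientCaps S ∧ AllClubsOk U fam S ∧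
      (k : ℚ) * ((Fintype.card U : ℚ) + 1) ≤ ∑ e ∈ S, wt U e ∧
      ∑ e ∈ S, wt U e < ((k : ℚ) + 1) * ((Fintype.card U : ℚ) + 1) := by
  have hsum_le : ∑ s ∈ X, (s.card : ℚ) ≤ Fintype.card U := by
    exact_mod_cast sum_card_le_card_of_pairwise_disjoint hXdisj
  have hsum_nonneg : 0 ≤ ∑ s ∈ X, (s.card : ℚ) := by positivity
  refine ⟨edges U X, edges_mono hX, donorPatientCaps_of_injOn (injOn_fst_edges hXdisj)
    injOn_snd_edges, allClubsOk_edges (fun s hs => hne s (hX hs)) hXdisj fam, ?_, ?_⟩ <;>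
  · rw [sum_wt_edges, hXcard]
    linarith
end

section
/- The standard kidney exchange model embeds into the club model: replacing each non-directed donor by a club with one donor, no patients, and γ = 1, and each donor-patient pair by a club with that donor, that patient, α = 1 and γ = 0, a simultaneous edge selection is feasible in the club model if and only if it decomposes into vertex-disjoint cycles over pair-clubs and chains initiated at altruist clubs, i.e., it is a feasible standard-model solution. -/
/-!
Because every club donates at most once, the club constraint at `c` reduces to a
one-bit statement: if `c` donates at all, then it is an altruist (`γ = 1`) or it
also receives (`α = 1`, `γ = 0`). Altruist clubs have no patients, hence no
incoming edge, so they can never lie on a directed cycle.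
-/

theorem Relation.not_transGen_of_forall_not {α : Type*} {r : α → α → Prop} {a c : α}
    (hc : ∀ b, ¬ r b c) : ¬ Relation.TransGen r a c := fun h =>
  let ⟨b, _, hbc⟩ := Relation.TransGen.tail'_iff.mp h
  hc b hbc

namespace KidneyExchange

theorem le_add_indicator_iff_of_le_one {a b : ℕ} (p : Prop) [Decidable p] (ha : a ≤ 1) :
    a ≤ b + (if p then 1 else 0) ↔ (0 < a → p ∨ 0 < b) := by
  by_cases hp : p <;>
    simp only [hp, if_true, if_false, true_or, false_or, implies_true, iff_true] <;> omega

theorem card_filter_eq_pos_iff {α β : Type*} [DecidableEq β] {S : Finset α} (f : α → β) (b : β) :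
    0 < (S.filter fun e => f e = b).card ↔ ∃ e ∈ S, f e = b := by
  rw [Finset.card_pos, Finset.filter_nonempty_iff]

variable {C : Type} [DecidableEq C]

theorem club_constraint_iff (altruist : C → Prop) [DecidablePred altruist]
    {S : Finset (C × C)} {c : C} (hout : (S.filter fun e => e.1 = c).card ≤ 1) :
    (S.filter fun e => e.1 = c).card ≤
        (S.filter fun e => e.2 = c).card + (if altruist c then 1 else 0) ↔
      ∀ e ∈ S, e.1 = c → altruist c ∨ ∃ e' ∈ S, e'.2 = c := by
  rw [le_add_indicator_iff_of_le_one _ hout, card_filter_eq_pos_iff, card_filter_eq_pos_iff]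
  constructor
  · intro h e he hec
    exact h ⟨e, he, hec⟩
  · rintro h ⟨e, he, hec⟩
    exact h e he hec

end KidneyExchange

open KidneyExchange in
theorem stmt_8_general {C : Type} [DecidableEq C]
    (altruist : C → Prop) [DecidablePred altruist] (S : Finset (C × C))
    (hout : ∀ c, (S.filter fun e => e.1 = c).card ≤ 1)
    (hnopat : ∀ c, altruist c → ∀ b, (b, c) ∉ S) :
    (∀ c, (S.filter fun e => e.1 = c).card ≤
        (S.filter fun e => e.2 = c).card + (if altruist c then 1 else 0))
      ↔ ((∀ e ∈ S, altruist e.1 ∨ ∃ e' ∈ S, e'.2 = e.1) ∧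
          (∀ c, Relation.TransGen (fun a b => (a, b) ∈ S) c c → ¬ altruist c)) := by
  have hacyclic : ∀ c, Relation.TransGen (fun a b => (a, b) ∈ S) c c → ¬ altruist c :=
    fun c hcyc ha => Relation.not_transGen_of_forall_not (hnopat c ha) hcyc
  rw [and_iff_left hacyclic]
  simp only [club_constraint_iff altruist (hout _)]
  constructor
  · intro h e he
    exact h e.1 e he rfl
  · rintro h c e he rfl
    exact h e he

/-- the standard kidney exchange model embeds into the club
model. Clubs are the vertices of type `C`: altruist clubs (one donor, no
patients, `γ = 1`) and pair clubs (one donor, one patient, `α = 1`, `γ = 0`).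
`S` is the selected set of inter-club edges; each donor donates at most once
and each patient receives at most once (out/in-degree ≤ 1), and altruists
have no patients hence no incoming edges. Then the club feasibility
constraints (out-degree ≤ in-degree + γ for every club) hold iff `S`
decomposes into vertex-disjoint cycles over pair-clubs and chains initiated
at altruist clubs: every donating club is an altruist or also receives, and
no club on a directed cycle is an altruist. -/
theorem stmt_8 {C : Type} [Fintype C] [DecidableEq C]
    (altruist : C → Prop) [DecidablePred altruist] (S : Finset (C × C))
    (hloop : ∀ c, (c, c) ∉ S)
    (hout : ∀ c, (S.filter fun e => e.1 = c).card ≤ 1)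
    (hin : ∀ c, (S.filter fun e => e.2 = c).card ≤ 1)
    (hnopat : ∀ c, altruist c → ∀ b, (b, c) ∉ S) :
    (∀ c, (S.filter fun e => e.1 = c).card ≤
        (S.filter fun e => e.2 = c).card + (if altruist c then 1 else 0))
      ↔ ((∀ e ∈ S, altruist e.1 ∨ ∃ e' ∈ S, e'.2 = e.1) ∧
          (∀ c, Relation.TransGen (fun a b => (a, b) ∈ S) c c → ¬ altruist c)) :=
  stmt_8_general altruist S hout hnopat
end

section
/- If in the capped operation-frame formulation the DAG of frames is a total order (a chain) and the constraints hold at every frame, then the real-time feasibility condition n_d^ext(t) ≤ α_c · n_p^ext(t) + γ_c holds at every time t when the frames are executed in that order, under the convention that all transplants in a frame occur simultaneously and a frame's own incoming transplants do not count toward its outgoing constraint. -/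
/-- frames totally ordered `t_1 < … < t_k` (indexed by `Fin k`);
`d c j` and `p c j` count external donations from and to club `c` in frame
`j`. If the capped formulation constraint
`Σ_{j ≤ i} d(c,t_j) ≤ ⌊γ_c + α_c · Σ_{j < i} p(c,t_j)⌋` holds at every frame,
then the real-time feasibility condition
`n_d^ext(t) ≤ α_c · n_p^ext(t) + γ_c` holds at every time, where by the
simultaneity convention the cumulative counts at the execution of frame `i`
are `n_d^ext = Σ_{j ≤ i} d` and `n_p^ext = Σ_{j < i} p` (a frame's own
incoming transplants do not count toward its outgoing constraint). -/
theorem stmt_11 (k : ℕ) {C : Type} (d p : C → Fin k → ℕ) (α γ : C → ℚ)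
    (hcon : ∀ (c : C) (i : Fin k),
      ((∑ j ∈ Finset.Iic i, d c j : ℕ) : ℤ) ≤
        ⌊γ c + α c * ∑ j ∈ Finset.Iio i, (p c j : ℚ)⌋) :
    ∀ (c : C) (i : Fin k),
      ((∑ j ∈ Finset.Iic i, d c j : ℕ) : ℚ) ≤
        α c * (∑ j ∈ Finset.Iio i, (p c j : ℚ)) + γ c := by
  intro c i
  rw [add_comm]
  exact_mod_cast Int.le_floor.mp (hcon c i)
end

section
/- In the club model where every club is a pair (one donor, one patient, α = 1, γ = 0) or an altruist (one donor, no patient, γ = 1), with a total order of frames each of size cap K and the per-frame feasibility constraints, any single directed cycle of length L among pair-clubs is schedulable if and only if L ≤ K (all L transplants must occupy one frame), whereas a chain of length L starting at an altruist is schedulable over ⌈L/K⌉ frames for any L. -/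
/-- A schedule of the edges of a structure (edges of type `E`, with source and
target clubs `src`, `tgt`) into totally ordered frames `Fin n` is feasible if
at most `K` edges are assigned to each frame, and for each club `c` and frame
`t`, the cumulative donations out of `c` through frame `t` are at most
`γ c` plus the cumulative receipts of `c` through frame `t` (edges within the
same frame are treated as simultaneous). -/
def SchedFeasible {E C : Type} [Fintype E] [DecidableEq C] [DecidableEq E]
    (K : ℕ) (γ : C → ℕ) (src tgt : E → C) {n : ℕ} (f : E → Fin n) : Prop :=
  (∀ t : Fin n, (Finset.univ.filter fun e => f e = t).card ≤ K) ∧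
  (∀ (c : C) (t : Fin n),
    (Finset.univ.filter fun e => src e = c ∧ f e ≤ t).card ≤
      γ c + (Finset.univ.filter fun e => tgt e = c ∧ f e ≤ t).card)

/-!
A pair club has no credit, so it can only donate in a frame no earlier than the one in which it
receives. Along a cycle of pairs this makes the frame index weakly increase all the way round,
hence constant, and the whole cycle sits in one frame of capacity `K`. Along a chain the credit of
the altruist starts the flow, and any monotone schedule works, e.g. cutting the chain into
consecutive blocks of `K` edges.
-/

open Finset Equiv

namespace SchedFeasible

variable {E C : Type} [Fintype E] [DecidableEq C] [DecidableEq E] {K : ℕ} {γ : C → ℕ}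
  {src tgt : E → C} {n : ℕ} {f : E → Fin n}

theorem card_le_of_forall_eq (h : SchedFeasible K γ src tgt f) {t : Fin n}
    (ht : ∀ e, f e = t) : Fintype.card E ≤ K := by
  simpa [ht] using h.1 t

theorem exists_tgt_eq_le (h : SchedFeasible K γ src tgt f) (e : E) (hγ : γ (src e) = 0) :
    ∃ e', tgt e' = src e ∧ f e' ≤ f e := by
  have hdon : 0 < #{e' | src e' = src e ∧ f e' ≤ f e} := card_pos.mpr ⟨e, by simp⟩
  have hflow := h.2 (src e) (f e)
  obtain ⟨e', he'⟩ := card_pos.mp (show 0 < #{e' | tgt e' = src e ∧ f e' ≤ f e} by omega)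
  exact ⟨e', (mem_filter.mp he').2⟩

end SchedFeasible

theorem schedFeasible_const_zero {E C : Type} [Fintype E] [DecidableEq C] [DecidableEq E]
    {K : ℕ} {γ : C → ℕ} {src tgt : E → C} (hE : Fintype.card E ≤ K)
    (hbal : ∀ c, #{e | src e = c} ≤ γ c + #{e | tgt e = c}) :
    SchedFeasible K γ src tgt (fun _ => (0 : Fin 1)) :=
  ⟨fun _ => (card_filter_le _ _).trans hE,
    fun c _ => by simpa only [Fin.zero_le, and_true] using hbal c⟩

theorem Equiv.Perm.SameCycle.eq_of_forall_le_apply {α β : Type*} [Finite α] [PartialOrder β]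
    {σ : Perm α} {f : α → β} (hf : ∀ x, f x ≤ f (σ x)) {x y : α} (hxy : σ.SameCycle x y) :
    f x = f y := by
  have hpow : ∀ (k : ℕ) (x : α), f x ≤ f ((σ ^ k) x) := by
    intro k
    induction k with
    | zero => simp
    | succ k ih =>
      exact fun x => (ih x).trans (by simpa only [pow_succ', Perm.mul_apply] using hf _)
  obtain ⟨i, hi⟩ := hxy.exists_nat_pow_eq
  obtain ⟨j, hj⟩ := hxy.symm.exists_nat_pow_eq
  exact le_antisymm (hi ▸ hpow i x) (hj ▸ hpow j y)

section Cycle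

variable {α : Type} [Fintype α] [DecidableEq α] {K : ℕ}

theorem le_apply_of_schedFeasible_perm {σ : Perm α} {n : ℕ} {f : α → Fin n}
    (h : SchedFeasible K (fun _ => 0) (fun i => i) σ f) (x : α) : f x ≤ f (σ x) := by
  obtain ⟨e, he, hle⟩ := h.exists_tgt_eq_le (σ x) rfl
  rwa [σ.injective he] at hle

theorem card_le_of_schedFeasible_isCycle {σ : Perm α} (hσ : σ.IsCycle)
    (hsupp : σ.support = univ) {n : ℕ} {f : α → Fin n}
    (h : SchedFeasible K (fun _ => 0) (fun i => i) σ f) : Fintype.card α ≤ K := by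
  obtain ⟨x, hx, -⟩ := id hσ
  have hmoved : ∀ y, σ y ≠ y := fun y => Perm.mem_support.mp (hsupp ▸ mem_univ y)
  exact h.card_le_of_forall_eq fun y =>
    ((hσ.sameCycle hx (hmoved y)).eq_of_forall_le_apply (le_apply_of_schedFeasible_perm h)).symm

theorem schedFeasible_perm_const_zero (σ : Perm α) (hK : Fintype.card α ≤ K) :
    SchedFeasible K (fun _ => 0) (fun i => i) σ (fun _ => (0 : Fin 1)) := by
  refine schedFeasible_const_zero hK fun c => ?_
  have hσ : (univ.filter fun e => σ e = c) = {σ.symm c} := by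
    ext e; simp [Equiv.eq_symm_apply]
  simp [hσ, filter_eq']

end Cycle

theorem val_finRotate {L : ℕ} (hL : 0 < L) (i : Fin L) : (finRotate L i : ℕ) = (i + 1) % L := by
  have : NeZero L := ⟨hL.ne'⟩
  simp [finRotate_apply, Fin.val_add]

theorem schedFeasible_chain_of_monotone {m K n : ℕ} {f : Fin m → Fin n} (hf : Monotone f)
    (hcap : ∀ t, #{e | f e = t} ≤ K) :
    SchedFeasible K (fun c : Fin (m + 1) => if c = 0 then 1 else 0)
      (fun i => i.castSucc) (fun i => i.succ) f := by
  refine ⟨hcap, fun c t => ?_⟩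
  set D := univ.filter fun e : Fin m => e.castSucc = c ∧ f e ≤ t
  set R := univ.filter fun e : Fin m => e.succ = c ∧ f e ≤ t
  have hD : #D ≤ 1 := card_le_one.mpr fun a ha b hb =>
    Fin.castSucc_injective _ (((mem_filter.mp ha).2.1).trans ((mem_filter.mp hb).2.1).symm)
  by_cases hc : c = 0
  · simp only [hc, if_true]
    omega
  obtain ⟨e', rfl⟩ := Fin.exists_succ_eq.mpr hc
  obtain hDe | ⟨e, he⟩ := D.eq_empty_or_nonempty
  · simp [hDe]
  obtain ⟨hee', het⟩ := (mem_filter.mp he).2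
  have hle : f e' ≤ f e := hf (Fin.le_of_lt (by simpa using (congrArg Fin.val hee').ge))
  have hR : 0 < #R := card_pos.mpr ⟨e', by simpa [R] using hle.trans het⟩
  omega

theorem Nat.div_lt_add_sub_one_div {m K i : ℕ} (hK : 0 < K) (hi : i < m) :
    i / K < (m + K - 1) / K := by
  rw [Nat.lt_iff_add_one_le, Nat.le_div_iff_mul_le hK, Nat.add_one_mul]
  have := Nat.div_mul_le_self i K
  omega

def blockSchedule (K m : ℕ) (hK : 0 < K) (i : Fin m) : Fin ((m + K - 1) / K) :=
  ⟨i / K, Nat.div_lt_add_sub_one_div hK i.isLt⟩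

theorem blockSchedule_monotone {K m : ℕ} (hK : 0 < K) : Monotone (blockSchedule K m hK) :=
  fun _ _ hij => Fin.mk_le_mk.mpr (Nat.div_le_div_right hij)

theorem card_filter_blockSchedule_le {K m : ℕ} (hK : 0 < K) (t : Fin ((m + K - 1) / K)) :
    #{i | blockSchedule K m hK i = t} ≤ K := by
  calc #{i | blockSchedule K m hK i = t} ≤ #(range K) := by
        refine card_le_card_of_injOn (fun i => (i : ℕ) % K)
          (fun i _ => mem_range.mpr (Nat.mod_lt _ hK)) fun a ha b hb hab => Fin.ext ?_
        have hdiv : (a : ℕ) / K = b / K :=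
          congrArg Fin.val ((mem_filter.mp ha).2.trans (mem_filter.mp hb).2.symm)
        rw [← Nat.div_add_mod (a : ℕ) K, ← Nat.div_add_mod (b : ℕ) K, hdiv,
          show (a : ℕ) % K = b % K from hab]
    _ = K := card_range K

/-- with pair clubs (α = 1, γ = 0) and altruist clubs (γ = 1):
a single directed cycle of length `L` among pair-clubs (clubs `Fin L`, edge
`i` from club `i` to club `i+1 mod L`) is schedulable iff `L ≤ K` (all `L`
transplants must occupy one frame), whereas a chain of length `L'` starting
at an altruist (clubs `Fin (L'+1)`, club 0 the altruist, edge `i` from club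
`i` to club `i+1`) is schedulable over `⌈L'/K⌉` frames for any `L'`. -/
theorem stmt_13 (K L : ℕ) (hK : 0 < K) (hL : 2 ≤ L) :
    ((∃ (n : ℕ) (f : Fin L → Fin n),
        SchedFeasible K (fun _ : Fin L => 0) (fun i => i)
          (fun i => ⟨((i : ℕ) + 1) % L, Nat.mod_lt _ (by omega)⟩) f) ↔ L ≤ K) ∧
    (∀ L' : ℕ, ∃ f : Fin L' → Fin ((L' + K - 1) / K),
        SchedFeasible K (fun c : Fin (L' + 1) => if c = 0 then 1 else 0)
          (fun i => i.castSucc) (fun i => i.succ) f) := by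
  have hrot : (fun i : Fin L => (⟨((i : ℕ) + 1) % L, Nat.mod_lt _ (by omega)⟩ : Fin L)) =
      finRotate L := funext fun i => Fin.ext (val_finRotate (by omega) i).symm
  refine ⟨⟨?_, fun hLK => ?_⟩, fun L' => ?_⟩
  · rintro ⟨n, f, hf⟩
    rw [hrot] at hf
    simpa using card_le_of_schedFeasible_isCycle (isCycle_finRotate_of_le hL)
      (support_finRotate_of_le hL) hf
  · exact ⟨1, _, hrot ▸ schedFeasible_perm_const_zero (finRotate L) (by simpa using hLK)⟩
  · exact ⟨blockSchedule K L' hK, schedFeasible_chain_of_monotone (blockSchedule_monotone hK)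
      (card_filter_blockSchedule_le hK)⟩
end
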